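/- Under Assumptions 1 and 2, the function v_∞: Δ(Ω) → ℝ is upper semicontinuous. -/

import Mathlib

open Filter Topology
open scoped Classical

noncomputable section

/-- Δ(Ω): beliefs, i.e. probability distributions on the finite state space Ω,
as a subspace of Ω → ℝ (its topology agrees with the total-variation one). -/
abbrev Belief (Ω : Type*) [Fintype Ω] :=
  {p : Ω → ℝ // (∀ ω, 0 ≤ p ω) ∧ ∑ ω, p ω = 1}

variable {Ω : Type*} [Fintype Ω]

/-- An element of F₀: a finite-support experiment, i.e. a finitely supported probability
distribution over beliefs (keys are the distinct posteriors p_j, values the positive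
weights λ_j). -/
structure SPExp (Ω : Type*) [Fintype Ω] where
  w : Belief Ω →₀ ℝ
  nonneg : ∀ p, 0 ≤ w p
  sum_one : ∑ p ∈ w.support, w p = 1

namespace SPExp

/-- τ(e): the support of an experiment. -/
def tau (e : SPExp Ω) : Finset (Belief Ω) := e.w.support

/-- Expectation of a real-valued function under an experiment. -/
def expect (e : SPExp Ω) (f : Belief Ω → ℝ) : ℝ := ∑ p ∈ e.w.support, e.w p * f p

/-- σ(e): the barycenter (expectation) of an experiment. -/
def sigma (e : SPExp Ω) : Belief Ω :=
  ⟨fun ω => ∑ p ∈ e.w.support, e.w p * p.val ω,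
   fun ω => Finset.sum_nonneg fun p _ => mul_nonneg (e.nonneg p) (p.2.1 ω),
   by
     calc ∑ ω, ∑ p ∈ e.w.support, e.w p * p.val ω
         = ∑ p ∈ e.w.support, ∑ ω, e.w p * p.val ω := Finset.sum_comm
       _ = ∑ p ∈ e.w.support, e.w p * ∑ ω, p.val ω := by
           refine Finset.sum_congr rfl fun p _ => ?_
           rw [Finset.mul_sum]
       _ = ∑ p ∈ e.w.support, e.w p := by
           refine Finset.sum_congr rfl fun p _ => ?_
           rw [p.2.2, mul_one]
       _ = 1 := e.sum_one⟩

/-- The trivial experiment (1, p). -/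
def triv (p : Belief Ω) : SPExp Ω where
  w := Finsupp.single p 1
  nonneg := fun q => by
    rw [Finsupp.single_apply]
    split <;> norm_num
  sum_one := by
    rw [Finsupp.support_single_ne_zero _ one_ne_zero]
    simp

end SPExp

/-- T: the set of trivial experiments. -/
def Trivials (Ω : Type*) [Fintype Ω] : Set (SPExp Ω) := Set.range SPExp.triv

/-- Weak convergence of experiments, viewed as Borel probability measures on Δ(Ω). -/
def WeakTendsto (es : ℕ → SPExp Ω) (e : SPExp Ω) : Prop :=
  ∀ f : Belief Ω → ℝ, Continuous f →
    Tendsto (fun i => (es i).expect f) atTop (𝓝 (e.expect f))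

/-- Convergence of beliefs in total variation. -/
def TVTendsto (ps : ℕ → Belief Ω) (p : Belief Ω) : Prop :=
  Tendsto (fun i => ∑ ω, |(ps i).val ω - p.val ω|) atTop (𝓝 0)

/-- Histories, most recent step first: entries are (experiment taken, realized posterior);
the starting belief is kept separately. -/
abbrev Hist (Ω : Type*) [Fintype Ω] := List (SPExp Ω × Belief Ω)

/-- last(ξ): the current belief after history ξ started at μ. -/
def lastBelief (μ : Belief Ω) : Hist Ω → Belief Ω
  | [] => μ
  | (_, p) :: _ => p

/-- Pr[ξ]: the probability of a history. -/
def histProb : Hist Ω → ℝ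
  | [] => 1
  | (e, p) :: ξ => e.w p * histProb ξ

/-- A sequential persuasion starting from μ with feasible experiments F, given by its
history-dependent choice of the next (feasible, Bayes-plausible) experiment.  An n-step
sequential persuasion is such a strategy used for n steps; an infinite sequential
persuasion is the strategy itself. -/
structure SeqP {Ω : Type*} [Fintype Ω] (F : Set (SPExp Ω)) (μ : Belief Ω) where
  next : Hist Ω → SPExp Ω
  feasible : ∀ ξ, next ξ ∈ F
  bayes : ∀ ξ, (next ξ).sigma = lastBelief μ ξ

variable {F : Set (SPExp Ω)} {μ : Belief Ω}

/-- Expectation of g over the n-step histories of S extending ξ. -/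
def histExp (S : SeqP F μ) (g : Hist Ω → ℝ) : ℕ → Hist Ω → ℝ
  | 0, ξ => g ξ
  | n + 1, ξ => (S.next ξ).expect fun p => histExp S g n ((S.next ξ, p) :: ξ)

/-- Ξ_n: the set of n-step histories of S. -/
def Hists (S : SeqP F μ) : ℕ → Set (Hist Ω)
  | 0 => {[]}
  | n + 1 => {ξ' | ∃ ξ ∈ Hists S n, ∃ p ∈ (S.next ξ).tau, ξ' = (S.next ξ, p) :: ξ}

/-- ξ padded by l trivial steps. -/
def padHist (μ : Belief Ω) (ξ : Hist Ω) (l : ℕ) : Hist Ω :=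
  List.replicate l (SPExp.triv (lastBelief μ ξ), lastBelief μ ξ) ++ ξ

/-- S terminates after ξ: all subsequent choices (along trivial continuations of ξ)
are the trivial experiment. -/
def TerminatesAfter (S : SeqP F μ) (ξ : Hist Ω) : Prop :=
  ∀ l : ℕ, S.next (padHist μ ξ l) = SPExp.triv (lastBelief μ ξ)

/-- 𝒱(S⁽ⁿ⁾) = E[v(b_n)], the expected utility of the n-step persuasion given by the
first n steps of S. -/
def stepUtility (v : Belief Ω → ℝ) (S : SeqP F μ) (n : ℕ) : ℝ :=
  histExp S (fun ξ => v (lastBelief μ ξ)) n []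

/-- Pr[S terminates after n steps]. -/
def termProb (S : SeqP F μ) (n : ℕ) : ℝ :=
  histExp S (fun ξ => if TerminatesAfter S ξ then 1 else 0) n []

/-- 𝒱(S) for an infinite sequential persuasion S. -/
def infUtility (v : Belief Ω → ℝ) (S : SeqP F μ) : ℝ :=
  ⨆ n : ℕ, histExp S (fun ξ => if TerminatesAfter S ξ then v (lastBelief μ ξ) else 0) n []

/-- Pr[b_n ∈ O] for the belief b_n induced by S after n steps. -/
def massIn (S : SeqP F μ) (O : Set (Belief Ω)) (n : ℕ) : ℝ :=
  histExp S (fun ξ => if lastBelief μ ξ ∈ O then 1 else 0) n []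

/-- v_n(p): the optimal value over n-step sequential persuasions starting from p. -/
def vN (F : Set (SPExp Ω)) (v : Belief Ω → ℝ) (n : ℕ) (p : Belief Ω) : ℝ :=
  ⨆ S : SeqP F p, stepUtility v S n

/-- v_∞(p): the optimal value over infinite sequential persuasions starting from p. -/
def vInf (F : Set (SPExp Ω)) (v : Belief Ω → ℝ) (p : Belief Ω) : ℝ :=
  ⨆ S : SeqP F p, infUtility v S

/-- Assumption 1: a uniform support bound h, and weak closedness of F. -/
def Assumption1 (F : Set (SPExp Ω)) (h : ℕ) : Prop :=
  (∀ e ∈ F, e.tau.card ≤ h) ∧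
  ∀ es : ℕ → SPExp Ω, (∀ i, es i ∈ F) → ∀ e : SPExp Ω, WeakTendsto es e → e ∈ F

/-- Shannon entropy of a belief. -/
def entropy (p : Belief Ω) : ℝ := -∑ ω, p.val ω * Real.log (p.val ω)

/-- Assumption 2: every nontrivial feasible experiment lowers expected entropy by δ. -/
def Assumption2 (F : Set (SPExp Ω)) (δ : ℝ) : Prop :=
  ∀ e ∈ F \ Trivials Ω, e.expect entropy ≤ entropy e.sigma - δ

/-- S is (effectively) an n-step sequential persuasion: after n steps it only takes
trivial experiments. -/
def IsNStep (S : SeqP F μ) (n : ℕ) : Prop :=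
  ∀ ξ : Hist Ω, n ≤ ξ.length → S.next ξ = SPExp.triv (lastBelief μ ξ)

/-- Assumption 3 at prior μ: a sequence of finite-step sequential persuasions whose
values tend to v_∞(μ) and which terminate at a uniform rate. -/
def Assumption3 (F : Set (SPExp Ω)) (v : Belief Ω → ℝ) (μ : Belief Ω) : Prop :=
  ∃ (nk : ℕ → ℕ) (Sk : ℕ → SeqP F μ),
    (∀ k, IsNStep (Sk k) (nk k)) ∧
    Tendsto (fun k => stepUtility v (Sk k) (nk k)) atTop (𝓝 (vInf F v μ)) ∧
    ∀ ε : ℝ, 0 < ε → ∃ N : ℕ, ∀ k, N ≤ nk k → 1 - ε ≤ termProb (Sk k) N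

/-- v̂: the concave closure of v (the value of unconstrained Bayesian persuasion). -/
def concaveClosure (v : Belief Ω → ℝ) (p : Belief Ω) : ℝ :=
  sSup {x : ℝ | ∃ e : SPExp Ω, e.sigma = p ∧ x = e.expect v}

/-- O is implementable for (μ, F). -/
def Implementable (F : Set (SPExp Ω)) (μ : Belief Ω) (O : Set (Belief Ω)) : Prop :=
  ∀ ε : ℝ, 0 < ε → ∃ (n : ℕ) (S : SeqP F μ), 1 - ε < massIn S O n

/-- S is a Markov sequential persuasion compatible with (μ, D, Z, ρ). -/
def MarkovCompatible (S : SeqP F μ) (D Z : Set (Belief Ω)) (ρ : Belief Ω → SPExp Ω) : Prop :=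
  ∀ ξ : Hist Ω,
    (lastBelief μ ξ ∈ D → S.next ξ = ρ (lastBelief μ ξ)) ∧
    (lastBelief μ ξ ∈ Z → S.next ξ = SPExp.triv (lastBelief μ ξ))

/-- The j-th child of vertex m at depth n of the infinite h-ary tree. -/
def treeChild {h n : ℕ} (m : Fin (h ^ n)) (j : Fin h) : Fin (h ^ (n + 1)) :=
  ⟨m.val * h + j.val, by
    have h1 : m.val + 1 ≤ h ^ n := m.isLt
    have h2 : j.val < h := j.isLt
    calc m.val * h + j.val < m.val * h + h := by omega
      _ = (m.val + 1) * h := by ring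
      _ ≤ h ^ n * h := Nat.mul_le_mul h1 le_rfl
      _ = h ^ (n + 1) := (pow_succ h n).symm⟩

/-- An h-branching sequential persuasion starting from μ. -/
structure HBranch (Ω : Type*) [Fintype Ω] (F : Set (SPExp Ω)) (h : ℕ) (μ : Belief Ω) where
  π : ∀ n : ℕ, Fin (h ^ n) → ℝ
  β : ∀ n : ℕ, Fin (h ^ n) → Belief Ω
  η : ∀ n : ℕ, Fin (h ^ n) → SPExp Ω
  π_nonneg : ∀ n m, 0 ≤ π n m
  π_sum : ∀ n : ℕ, ∑ m, π n m = 1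
  η_mem : ∀ n m, η n m ∈ F
  β_root : ∀ m, β 0 m = μ
  compat_sigma : ∀ n m, (η n m).sigma = β n m
  compat_tau : ∀ (n : ℕ) (m : Fin (h ^ n)), ∀ p ∈ (η n m).tau,
    ∃ j : Fin h, β (n + 1) (treeChild m j) = p
  consistent : ∀ (n : ℕ) (m : Fin (h ^ n)) (p : Belief Ω),
    (∑ j : Fin h, if β (n + 1) (treeChild m j) = p then π (n + 1) (treeChild m j) else 0)
      = π n m * (η n m).w p

/-- c' (at depth n + l) is a descendant of c (at depth n) in the h-ary tree. -/
def Descendant {h : ℕ} : {n : ℕ} → (l : ℕ) → Fin (h ^ n) → Fin (h ^ (n + l)) → Prop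
  | _, 0, c, c' => c = c'
  | _, l + 1, c, c' => ∃ c'' j, Descendant l c c'' ∧ c' = treeChild c'' j

namespace HBranch

variable {h : ℕ}

/-- B terminates after vertex m at depth n. -/
def TermAfter (B : HBranch Ω F h μ) (n : ℕ) (m : Fin (h ^ n)) : Prop :=
  B.η n m ∈ Trivials Ω ∧
  ∀ (l : ℕ) (c' : Fin (h ^ (n + l))), Descendant l m c' → 0 < B.π (n + l) c' →
    B.η (n + l) c' ∈ Trivials Ω

/-- Pr[B terminates after n steps]. -/
def termProb (B : HBranch Ω F h μ) (n : ℕ) : ℝ :=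
  ∑ m : Fin (h ^ n), if B.TermAfter n m then B.π n m else 0

end HBranch

/-- B represents the infinite sequential persuasion S (via maps r_n : C_n → Ξ_n). -/
def Represents (S : SeqP F μ) {h : ℕ} (B : HBranch Ω F h μ) : Prop :=
  ∃ r : ∀ n : ℕ, Fin (h ^ n) → Hist Ω,
    ∀ n : ℕ,
      (∀ c, r n c ∈ Hists S n) ∧
      (∀ ξ ∈ Hists S n, histProb ξ = ∑ c, if r n c = ξ then B.π n c else 0) ∧
      (∀ c, lastBelief μ (r n c) = B.β n c ∧ S.next (r n c) = B.η n c) ∧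
      (∀ l : ℕ, ∀ ξ ∈ Hists S n, ∀ ξ' ∈ Hists S (n + l),
        (ξ <:+ ξ' ↔
          ∀ c' : Fin (h ^ (n + l)), r (n + l) c' = ξ' →
            ∃ c : Fin (h ^ n), r n c = ξ ∧ Descendant l c c'))

/-- The number of nontrivial experiments taken along a history. -/
def nontrivCount (ξ : Hist Ω) : ℕ :=
  ξ.countP fun s => decide (s.1 ∉ Trivials Ω)

end

/-! v_∞ is squeezed between the finite-horizon values: v_K ≤ v_∞ ≤ v_K + V̄ log|Ω| / (δ (K + 1)).
The lower bound comes from truncating a strategy after K steps. For the upper bound, entropy plus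
δ times the number of nontrivial experiments taken so far is a supermartingale under Assumption 2,
so the expected number of nontrivial experiments is at most log|Ω| / δ; histories that stay within
K of them are worth at most v_K, and the others have probability at most log|Ω| / (δ (K + 1)).
Each v_K is upper semicontinuous, by induction along the Bellman recursion
v_{n+1}(p) = sup_{e ∈ 𝓕(p)} E_e[v_n]: by Assumption 1, feasible experiments have at most h
posteriors, so along a convergent sequence of priors they have a weakly convergent subsequence
whose limit is again feasible, and E_e[v_n] is upper semicontinuous in the weights and posteriors.
An infimum of upper semicontinuous functions v_K + ε_K is upper semicontinuous. -/

noncomputable section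

variable {Ω : Type*} [Fintype Ω]

namespace SPExp

lemma expect_triv (q : Belief Ω) (f : Belief Ω → ℝ) : (triv q).expect f = f q := by
  simp [expect, triv]

lemma sigma_val (e : SPExp Ω) (ω : Ω) : e.sigma.val ω = e.expect fun r => r.val ω := rfl

lemma sigma_triv (q : Belief Ω) : (triv q).sigma = q :=
  Subtype.ext <| funext fun _ => expect_triv q _

lemma triv_mem_trivials (p : Belief Ω) : triv p ∈ Trivials Ω := ⟨p, rfl⟩

lemma eq_triv_of_mem_trivials {e : SPExp Ω} (he : e ∈ Trivials Ω) : e = triv e.sigma := by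
  obtain ⟨r, rfl⟩ := he
  rw [sigma_triv]

lemma expect_mono (e : SPExp Ω) {f g : Belief Ω → ℝ} (h : ∀ p, f p ≤ g p) :
    e.expect f ≤ e.expect g :=
  Finset.sum_le_sum fun p _ => mul_le_mul_of_nonneg_left (h p) (e.nonneg p)

lemma expect_const (e : SPExp Ω) (c : ℝ) : e.expect (fun _ => c) = c := by
  rw [expect, ← Finset.sum_mul, e.sum_one, one_mul]

lemma expect_add (e : SPExp Ω) (f g : Belief Ω → ℝ) :
    e.expect (fun p => f p + g p) = e.expect f + e.expect g := by
  simp only [expect, mul_add, Finset.sum_add_distrib]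

lemma expect_const_mul (e : SPExp Ω) (c : ℝ) (f : Belief Ω → ℝ) :
    e.expect (fun p => c * f p) = c * e.expect f := by
  simp only [expect, Finset.mul_sum]
  exact Finset.sum_congr rfl fun p _ => by ring

def ofSimplex {ι : Type*} [Fintype ι] (t : ι → ℝ) (ht : t ∈ stdSimplex ℝ ι)
    (q : ι → Belief Ω) : SPExp Ω where
  w := ∑ j, Finsupp.single (q j) (t j)
  nonneg p := by
    rw [Finsupp.finsetSum_apply]
    exact Finset.sum_nonneg fun j _ => by
      rw [Finsupp.single_apply]; split_ifs <;> simp [ht.1 j]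
  sum_one := by
    change (∑ j, Finsupp.single (q j) (t j)).sum (fun _ a => a) = 1
    rw [← Finsupp.sum_finsetSum_index (fun _ => rfl) (fun _ _ _ => rfl), ← ht.2]
    exact Finset.sum_congr rfl fun j _ => Finsupp.sum_single_index rfl

lemma expect_ofSimplex {ι : Type*} [Fintype ι] (t : ι → ℝ) (ht : t ∈ stdSimplex ℝ ι)
    (q : ι → Belief Ω) (f : Belief Ω → ℝ) :
    (ofSimplex t ht q).expect f = ∑ j, t j * f (q j) := by
  change (∑ j, Finsupp.single (q j) (t j)).sum (fun p a => a * f p) = _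
  rw [← Finsupp.sum_finsetSum_index (fun _ => zero_mul _) (fun _ _ _ => add_mul _ _ _)]
  exact Finset.sum_congr rfl fun j _ => Finsupp.sum_single_index (zero_mul _)

lemma exists_expect_eq_sum (e : SPExp Ω) {h : ℕ} (hcard : e.tau.card ≤ h) :
    ∃ t ∈ stdSimplex ℝ (Fin h), ∃ q : Fin h → Belief Ω,
      ∀ f : Belief Ω → ℝ, e.expect f = ∑ j, t j * f (q j) := by
  obtain ⟨ι⟩ : Nonempty (e.tau ↪ Fin h) :=
    Function.Embedding.nonempty_of_card_le (by simpa using hcard)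
  set t : Fin h → ℝ := Function.extend ι (fun p => e.w p) 0
  set q : Fin h → Belief Ω := Function.extend ι Subtype.val fun _ => e.sigma
  have hsum : ∀ f : Belief Ω → ℝ, e.expect f = ∑ j, t j * f (q j) := fun f => by
    rw [expect, ← Finset.sum_coe_sort]
    refine Fintype.sum_of_injective ι ι.injective _ _ (fun j hj => ?_) fun p => ?_
    · simp [t, Function.extend_apply' _ _ _ hj]
    · simp [t, q, ι.injective.extend_apply]
  refine ⟨t, ⟨fun j => ?_, by simpa [e.expect_const] using (hsum fun _ => 1).symm⟩, q, hsum⟩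
  by_cases hj : ∃ p, ι p = j
  · obtain ⟨p, rfl⟩ := hj
    simpa [t, ι.injective.extend_apply] using e.nonneg p
  · simp [t, Function.extend_apply' _ _ _ hj]

end SPExp

section Histories

variable {F : Set (SPExp Ω)} {μ ν : Belief Ω}

@[simp]
lemma lastBelief_cons (μ : Belief Ω) (s : SPExp Ω × Belief Ω) (ξ : Hist Ω) :
    lastBelief μ (s :: ξ) = s.2 := rfl

lemma lastBelief_append (μ : Belief Ω) (ξ : Hist Ω) (s : SPExp Ω × Belief Ω) :
    lastBelief μ (ξ ++ [s]) = lastBelief s.2 ξ := by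
  cases ξ <;> rfl

lemma lastBelief_padHist (μ : Belief Ω) (ξ : Hist Ω) (l : ℕ) :
    lastBelief μ (padHist μ ξ l) = lastBelief μ ξ := by
  cases l <;> rfl

lemma length_padHist (μ : Belief Ω) (ξ : Hist Ω) (l : ℕ) :
    (padHist μ ξ l).length = l + ξ.length := by
  simp [padHist]

lemma nontrivCount_cons (s : SPExp Ω × Belief Ω) (ξ : Hist Ω) :
    nontrivCount (s :: ξ) = nontrivCount ξ + if s.1 ∈ Trivials Ω then 0 else 1 := by
  by_cases hs : s.1 ∈ Trivials Ω <;> simp [nontrivCount, hs]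

namespace SeqP

lemma ext {S T : SeqP F μ} (h : ∀ ξ, S.next ξ = T.next ξ) : S = T := by
  obtain ⟨_, _, _⟩ := S
  obtain ⟨_, _, _⟩ := T
  congr
  exact funext h

lemma next_eq_triv_of_mem_trivials (S : SeqP F μ) {ξ : Hist Ω} (h : S.next ξ ∈ Trivials Ω) :
    S.next ξ = SPExp.triv (lastBelief μ ξ) := by
  rw [SPExp.eq_triv_of_mem_trivials h, S.bayes]

protected def triv (hTF : Trivials Ω ⊆ F) (μ : Belief Ω) : SeqP F μ where
  next ξ := SPExp.triv (lastBelief μ ξ)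
  feasible _ := hTF (SPExp.triv_mem_trivials _)
  bayes _ := SPExp.sigma_triv _

def shift (S : SeqP F μ) (s : SPExp Ω × Belief Ω) : SeqP F s.2 where
  next ξ := S.next (ξ ++ [s])
  feasible _ := S.feasible _
  bayes ξ := by rw [S.bayes, lastBelief_append]

/-- Play `e` first and then, from the realized posterior `q`, the strategy `T q`. -/
def glue {e : SPExp Ω} (heF : e ∈ F) (hep : e.sigma = μ) (T : ∀ q : Belief Ω, SeqP F q) :
    SeqP F μ where
  next ξ := ξ.getLast?.elim e fun s => (T s.2).next ξ.dropLast
  feasible ξ := by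
    cases ξ.getLast? with
    | none => exact heF
    | some s => exact (T s.2).feasible _
  bayes ξ := by
    induction ξ using List.reverseRecOn with
    | nil => exact hep
    | append_singleton ζ s _ =>
      simp only [List.getLast?_concat, Option.elim, List.dropLast_concat]
      rw [(T s.2).bayes, lastBelief_append]

lemma glue_next_nil {e : SPExp Ω} (heF : e ∈ F) (hep : e.sigma = μ)
    (T : ∀ q : Belief Ω, SeqP F q) : (glue heF hep T).next [] = e := rfl

lemma glue_shift {e : SPExp Ω} (heF : e ∈ F) (hep : e.sigma = μ)
    (T : ∀ q : Belief Ω, SeqP F q) (q : Belief Ω) : (glue heF hep T).shift (e, q) = T q := by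
  refine SeqP.ext fun ξ => ?_
  simp only [shift, glue, List.getLast?_concat, Option.elim, List.dropLast_concat]

def truncate (S : SeqP F μ) (hTF : Trivials Ω ⊆ F) (n : ℕ) : SeqP F μ where
  next ξ := if ξ.length < n then S.next ξ else SPExp.triv (lastBelief μ ξ)
  feasible ξ := by
    split_ifs
    exacts [S.feasible ξ, hTF (SPExp.triv_mem_trivials _)]
  bayes ξ := by
    split_ifs
    exacts [S.bayes ξ, SPExp.sigma_triv _]

lemma terminatesAfter_truncate (S : SeqP F μ) (hTF : Trivials Ω ⊆ F) {n : ℕ} {ξ : Hist Ω}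
    (hξ : n ≤ ξ.length) : TerminatesAfter (S.truncate hTF n) ξ := fun l => by
  simp only [truncate, length_padHist, lastBelief_padHist]
  rw [if_neg (by omega)]

end SeqP

lemma histExp_succ (S : SeqP F μ) (g : Hist Ω → ℝ) (n : ℕ) (ξ : Hist Ω) :
    histExp S g (n + 1) ξ = (S.next ξ).expect fun p => histExp S g n ((S.next ξ, p) :: ξ) :=
  rfl

lemma histExp_congr {S₁ : SeqP F μ} {S₂ : SeqP F ν} {g₁ g₂ : Hist Ω → ℝ} (n : ℕ) (ξ : Hist Ω)
    (hS : ∀ ζ : Hist Ω, ζ.length < n + ξ.length → S₁.next ζ = S₂.next ζ)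
    (hg : ∀ ζ : Hist Ω, ζ.length = n + ξ.length → g₁ ζ = g₂ ζ) :
    histExp S₁ g₁ n ξ = histExp S₂ g₂ n ξ := by
  induction n generalizing ξ with
  | zero => exact hg ξ (by simp)
  | succ n ih =>
    rw [histExp_succ, histExp_succ, ← hS ξ (by omega)]
    refine congrArg _ (funext fun p => ih _ (fun ζ hζ => hS ζ ?_) fun ζ hζ => hg ζ ?_) <;>
      simp only [List.length_cons] at hζ <;> omega

lemma histExp_shift (S : SeqP F μ) (s : SPExp Ω × Belief Ω) (g : Hist Ω → ℝ) (n : ℕ)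
    (ξ : Hist Ω) : histExp S g n (ξ ++ [s]) = histExp (S.shift s) (fun ζ => g (ζ ++ [s])) n ξ := by
  induction n generalizing ξ with
  | zero => rfl
  | succ n ih => exact congrArg _ (funext fun p => ih ((S.next (ξ ++ [s]), p) :: ξ))

lemma stepUtility_succ (v : Belief Ω → ℝ) (S : SeqP F μ) (n : ℕ) :
    stepUtility v S (n + 1)
      = (S.next []).expect fun q => stepUtility v (S.shift (S.next [], q)) n := by
  refine congrArg _ (funext fun q => ?_)
  rw [stepUtility, ← List.nil_append [(S.next [], q)], histExp_shift]
  simp only [lastBelief_append]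

end Histories

section Superharmonic

variable {F : Set (SPExp Ω)} {μ : Belief Ω} {S : SeqP F μ} {Φ Ψ g : Hist Ω → ℝ}

def SeqP.IsSuperharmonic (S : SeqP F μ) (Φ : Hist Ω → ℝ) : Prop :=
  ∀ ξ, (S.next ξ).expect (fun p => Φ ((S.next ξ, p) :: ξ)) ≤ Φ ξ

namespace SeqP.IsSuperharmonic

lemma const (S : SeqP F μ) (c : ℝ) : S.IsSuperharmonic fun _ => c :=
  fun _ => (SPExp.expect_const _ c).le

lemma add (hΦ : S.IsSuperharmonic Φ) (hΨ : S.IsSuperharmonic Ψ) :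
    S.IsSuperharmonic fun ξ => Φ ξ + Ψ ξ := fun ξ => by
  rw [SPExp.expect_add]
  exact add_le_add (hΦ ξ) (hΨ ξ)

lemma const_mul (hΦ : S.IsSuperharmonic Φ) {c : ℝ} (hc : 0 ≤ c) :
    S.IsSuperharmonic fun ξ => c * Φ ξ := fun ξ => by
  rw [SPExp.expect_const_mul]
  exact mul_le_mul_of_nonneg_left (hΦ ξ) hc

lemma histExp_le (hΦ : S.IsSuperharmonic Φ) (hg : ∀ ξ, g ξ ≤ Φ ξ) (n : ℕ) (ξ : Hist Ω) :
    histExp S g n ξ ≤ Φ ξ := by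
  induction n generalizing ξ with
  | zero => exact hg ξ
  | succ n ih => exact ((S.next ξ).expect_mono fun p => ih _).trans (hΦ ξ)

end SeqP.IsSuperharmonic

end Superharmonic

section FiniteHorizon

variable {F : Set (SPExp Ω)} {μ : Belief Ω} {v : Belief Ω → ℝ} {Vhi : ℝ}

lemma stepUtility_le (hvhi : ∀ p, v p ≤ Vhi) (S : SeqP F μ) (n : ℕ) : stepUtility v S n ≤ Vhi :=
  (SeqP.IsSuperharmonic.const S Vhi).histExp_le (fun _ => hvhi _) n []

lemma stepUtility_le_vN (hvhi : ∀ p, v p ≤ Vhi) (S : SeqP F μ) (n : ℕ) :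
    stepUtility v S n ≤ vN F v n μ :=
  le_ciSup ⟨Vhi, Set.forall_mem_range.2 fun S => stepUtility_le hvhi S n⟩ S

lemma vN_zero (hTF : Trivials Ω ⊆ F) (p : Belief Ω) : vN F v 0 p = v p :=
  have : Nonempty (SeqP F p) := ⟨SeqP.triv hTF p⟩
  ciSup_const

lemma exists_expect_vN_gt (hTF : Trivials Ω ⊆ F) (hvhi : ∀ p, v p ≤ Vhi) {n : ℕ}
    {p : Belief Ω} {y : ℝ} (hy : y < vN F v (n + 1) p) :
    ∃ e ∈ F, e.sigma = p ∧ y < e.expect (vN F v n) := by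
  have : Nonempty (SeqP F p) := ⟨SeqP.triv hTF p⟩
  obtain ⟨S, hS⟩ := exists_lt_of_lt_ciSup hy
  refine ⟨S.next [], S.feasible [], S.bayes [], hS.trans_le ?_⟩
  rw [stepUtility_succ]
  exact SPExp.expect_mono _ fun q => stepUtility_le_vN hvhi _ n

lemma expect_vN_le (hTF : Trivials Ω ⊆ F) (hvhi : ∀ p, v p ≤ Vhi) {e : SPExp Ω} (heF : e ∈ F)
    {p : Belief Ω} (hep : e.sigma = p) (n : ℕ) : e.expect (vN F v n) ≤ vN F v (n + 1) p := by
  refine le_of_forall_pos_le_add fun ε hε => ?_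
  have hT : ∀ q : Belief Ω, ∃ T : SeqP F q, vN F v n q - ε < stepUtility v T n := fun q =>
    have : Nonempty (SeqP F q) := ⟨SeqP.triv hTF q⟩
    exists_lt_of_lt_ciSup (sub_lt_self _ hε)
  choose T hT using hT
  calc e.expect (vN F v n)
      ≤ e.expect (fun q => stepUtility v (T q) n + ε) := e.expect_mono fun q => by linarith [hT q]
    _ = stepUtility v (SeqP.glue heF hep T) (n + 1) + ε := by
      rw [stepUtility_succ, SeqP.glue_next_nil, e.expect_add, e.expect_const]
      simp only [SeqP.glue_shift]
    _ ≤ vN F v (n + 1) p + ε := by gcongr; exact stepUtility_le_vN hvhi _ _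

lemma vN_mono (hTF : Trivials Ω ⊆ F) (hvhi : ∀ p, v p ≤ Vhi) (p : Belief Ω) :
    Monotone fun n => vN F v n p :=
  monotone_nat_of_le_succ fun n => by
    simpa [SPExp.expect_triv] using
      expect_vN_le hTF hvhi (v := v) (hTF (SPExp.triv_mem_trivials p)) (SPExp.sigma_triv p) n

lemma le_vN (hTF : Trivials Ω ⊆ F) (hvhi : ∀ p, v p ≤ Vhi) (n : ℕ) (p : Belief Ω) :
    v p ≤ vN F v n p := by
  simpa [vN_zero hTF] using vN_mono hTF hvhi p (Nat.zero_le n)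

end FiniteHorizon

section Entropy

lemma entropy_eq_sum_negMulLog (p : Belief Ω) : entropy p = ∑ ω, Real.negMulLog (p.val ω) := by
  simp [entropy, Real.negMulLog, Finset.sum_neg_distrib]

lemma entropy_nonneg (p : Belief Ω) : 0 ≤ entropy p := by
  rw [entropy_eq_sum_negMulLog]
  refine Finset.sum_nonneg fun ω _ => Real.negMulLog_nonneg (p.2.1 ω) ?_
  calc p.val ω ≤ ∑ ω, p.val ω := Finset.single_le_sum (fun ω _ => p.2.1 ω) (Finset.mem_univ ω)
    _ = 1 := p.2.2

lemma entropy_le_log_card (p : Belief Ω) : entropy p ≤ Real.log (Fintype.card Ω) := by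
  have hn : (0 : ℝ) < Fintype.card Ω := by
    have : Nonempty Ω := by
      by_contra h
      simpa [not_nonempty_iff.1 h] using p.2.2
    exact_mod_cast Fintype.card_pos
  have hJ := Real.concaveOn_negMulLog.le_map_sum (t := Finset.univ)
    (w := fun _ => (Fintype.card Ω : ℝ)⁻¹) (p := fun ω => p.val ω) (fun _ _ => by positivity)
    (by simp [hn.ne']) (fun ω _ => p.2.1 ω)
  simp only [smul_eq_mul, ← Finset.mul_sum, p.2.2, mul_one] at hJ
  rw [Real.negMulLog, Real.log_inv, neg_mul_neg] at hJ
  rw [entropy_eq_sum_negMulLog]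
  exact le_of_mul_le_mul_left hJ (inv_pos.2 hn)

end Entropy

section EntropyBudget

variable {F : Set (SPExp Ω)} {μ : Belief Ω} {v : Belief Ω → ℝ} {Vhi δ : ℝ}

lemma isSuperharmonic_entropy_add_nontrivCount (hA2 : Assumption2 F δ) (S : SeqP F μ) :
    S.IsSuperharmonic fun ξ => entropy (lastBelief μ ξ) + δ * nontrivCount ξ := fun ξ => by
  by_cases htr : S.next ξ ∈ Trivials Ω
  · rw [S.next_eq_triv_of_mem_trivials htr, SPExp.expect_triv]
    simp [nontrivCount_cons, SPExp.triv_mem_trivials]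
  · have hH := hA2 _ ⟨S.feasible ξ, htr⟩
    rw [S.bayes] at hH
    simp only [nontrivCount_cons, if_neg htr, lastBelief_cons]
    rw [SPExp.expect_add, SPExp.expect_const]
    push_cast
    linarith

def budgetValue (F : Set (SPExp Ω)) (v : Belief Ω → ℝ) (μ : Belief Ω) (K : ℕ) (ξ : Hist Ω) :
    ℝ :=
  if nontrivCount ξ ≤ K then vN F v (K - nontrivCount ξ) (lastBelief μ ξ) else 0

lemma budgetValue_nonneg (hTF : Trivials Ω ⊆ F) (hv0 : ∀ p, 0 ≤ v p) (hvhi : ∀ p, v p ≤ Vhi)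
    (K : ℕ) (ξ : Hist Ω) : 0 ≤ budgetValue F v μ K ξ := by
  unfold budgetValue
  split_ifs
  exacts [(hv0 _).trans (le_vN hTF hvhi _ _), le_rfl]

lemma isSuperharmonic_budgetValue (hTF : Trivials Ω ⊆ F) (hv0 : ∀ p, 0 ≤ v p)
    (hvhi : ∀ p, v p ≤ Vhi) (S : SeqP F μ) (K : ℕ) :
    S.IsSuperharmonic (budgetValue F v μ K) := fun ξ => by
  by_cases htr : S.next ξ ∈ Trivials Ω
  · rw [S.next_eq_triv_of_mem_trivials htr, SPExp.expect_triv]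
    simp [budgetValue, nontrivCount_cons, SPExp.triv_mem_trivials]
  rcases lt_or_ge (nontrivCount ξ) K with hlt | hge
  · have hK : K - nontrivCount ξ = K - nontrivCount ξ - 1 + 1 := by omega
    simp only [budgetValue, nontrivCount_cons, if_neg htr, lastBelief_cons, if_pos hlt.le,
      if_pos (Nat.succ_le_of_lt hlt)]
    rw [hK, ← Nat.sub_sub]
    exact expect_vN_le hTF hvhi (S.feasible ξ) (S.bayes ξ) _
  · simp only [budgetValue, nontrivCount_cons, if_neg htr,
      if_neg (by omega : ¬ nontrivCount ξ + 1 ≤ K)]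
    rw [SPExp.expect_const]
    exact budgetValue_nonneg hTF hv0 hvhi K ξ

lemma le_budgetValue_add (hTF : Trivials Ω ⊆ F) (hvhi : ∀ p, v p ≤ Vhi) (hδ : 0 < δ) {K : ℕ}
    {c : ℝ} (hc : 0 ≤ c) (hcK : Vhi ≤ c * (δ * (K + 1))) (ξ : Hist Ω) :
    v (lastBelief μ ξ)
      ≤ budgetValue F v μ K ξ + c * (entropy (lastBelief μ ξ) + δ * nontrivCount ξ) := by
  have hH := entropy_nonneg (lastBelief μ ξ)
  by_cases hξ : nontrivCount ξ ≤ K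
  · have := le_vN hTF hvhi (K - nontrivCount ξ) (lastBelief μ ξ)
    have : 0 ≤ c * (entropy (lastBelief μ ξ) + δ * nontrivCount ξ) := by positivity
    rw [budgetValue, if_pos hξ]
    linarith
  · have hKξ : (K : ℝ) + 1 ≤ nontrivCount ξ := by exact_mod_cast Nat.lt_of_not_le hξ
    have := mul_le_mul_of_nonneg_left (mul_le_mul_of_nonneg_left hKξ hδ.le) hc
    have := mul_nonneg hc hH
    rw [budgetValue, if_neg hξ]
    linarith [hvhi (lastBelief μ ξ)]

lemma histExp_le_vN_add (hTF : Trivials Ω ⊆ F) (hv0 : ∀ p, 0 ≤ v p) (hvhi : ∀ p, v p ≤ Vhi)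
    (hδ : 0 < δ) (hA2 : Assumption2 F δ) (S : SeqP F μ) {g : Hist Ω → ℝ}
    (hg : ∀ ξ, g ξ ≤ v (lastBelief μ ξ)) (n K : ℕ) :
    histExp S g n [] ≤ vN F v K μ + Vhi * Real.log (Fintype.card Ω) / δ / (K + 1) := by
  set c := Vhi / δ / (K + 1)
  have hc : 0 ≤ c := div_nonneg (div_nonneg ((hv0 μ).trans (hvhi μ)) hδ.le) (by positivity)
  have hcK : Vhi ≤ c * (δ * (K + 1)) := (by simp only [c]; field_simp : c * (δ * (K + 1)) = Vhi).ge
  have hΦ := (isSuperharmonic_budgetValue hTF hv0 hvhi S K).add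
    ((isSuperharmonic_entropy_add_nontrivCount hA2 S).const_mul hc)
  calc histExp S g n [] ≤ budgetValue F v μ K [] + c * (entropy μ + δ * nontrivCount []) :=
        hΦ.histExp_le (fun ξ => (hg ξ).trans (le_budgetValue_add hTF hvhi hδ hc hcK ξ)) n []
    _ = vN F v K μ + c * entropy μ := by simp [budgetValue, nontrivCount, lastBelief]
    _ ≤ vN F v K μ + c * Real.log (Fintype.card Ω) := by gcongr; exact entropy_le_log_card μ
    _ = vN F v K μ + Vhi * Real.log (Fintype.card Ω) / δ / (K + 1) := by ring

end EntropyBudget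

section InfiniteHorizon

variable {F : Set (SPExp Ω)} {μ : Belief Ω} {v : Belief Ω → ℝ} {Vhi δ : ℝ}

lemma histExp_terminal_le (hv0 : ∀ p, 0 ≤ v p) (hvhi : ∀ p, v p ≤ Vhi) (S : SeqP F μ) (n : ℕ) :
    histExp S (fun ξ => if TerminatesAfter S ξ then v (lastBelief μ ξ) else 0) n [] ≤ Vhi :=
  (SeqP.IsSuperharmonic.const S Vhi).histExp_le
    (fun ξ => by split_ifs; exacts [hvhi _, (hv0 μ).trans (hvhi μ)]) n []

lemma infUtility_le (hv0 : ∀ p, 0 ≤ v p) (hvhi : ∀ p, v p ≤ Vhi) (S : SeqP F μ) :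
    infUtility v S ≤ Vhi :=
  ciSup_le (histExp_terminal_le hv0 hvhi S)

lemma vN_le_vInf (hTF : Trivials Ω ⊆ F) (hv0 : ∀ p, 0 ≤ v p) (hvhi : ∀ p, v p ≤ Vhi) (K : ℕ)
    (p : Belief Ω) : vN F v K p ≤ vInf F v p := by
  have : Nonempty (SeqP F p) := ⟨SeqP.triv hTF p⟩
  refine ciSup_le fun S => ?_
  set T := S.truncate hTF K
  calc stepUtility v S K
      = histExp T (fun ξ => if TerminatesAfter T ξ then v (lastBelief p ξ) else 0) K [] :=
        histExp_congr K [] (fun ζ hζ => (if_pos (by simpa using hζ)).symm)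
          fun ζ hζ => (if_pos (S.terminatesAfter_truncate hTF (by simp [hζ]))).symm
    _ ≤ infUtility v T :=
        le_ciSup ⟨Vhi, Set.forall_mem_range.2 (histExp_terminal_le hv0 hvhi T)⟩ K
    _ ≤ vInf F v p := le_ciSup ⟨Vhi, Set.forall_mem_range.2 (infUtility_le hv0 hvhi)⟩ T

lemma vInf_le_vN_add (hTF : Trivials Ω ⊆ F) (hv0 : ∀ p, 0 ≤ v p) (hvhi : ∀ p, v p ≤ Vhi)
    (hδ : 0 < δ) (hA2 : Assumption2 F δ) (K : ℕ) (p : Belief Ω) :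
    vInf F v p ≤ vN F v K p + Vhi * Real.log (Fintype.card Ω) / δ / (K + 1) := by
  have : Nonempty (SeqP F p) := ⟨SeqP.triv hTF p⟩
  exact ciSup_le fun S => ciSup_le fun n => histExp_le_vN_add hTF hv0 hvhi hδ hA2 S
    (fun ξ => by split_ifs; exacts [le_rfl, hv0 _]) n K

end InfiniteHorizon

section Semicontinuity

variable {X : Type*} [TopologicalSpace X]

lemma UpperSemicontinuousWithinAt.continuousWithinAt_mul {f g : X → ℝ} {s : Set X} {x : X}
    (hf : UpperSemicontinuousWithinAt f s x) (hg : ContinuousWithinAt g s x)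
    (hg0 : ∀ z ∈ s, 0 ≤ g z) (hx : x ∈ s) :
    UpperSemicontinuousWithinAt (fun z => g z * f z) s x := by
  intro y hy
  have hgx := hg0 x hx
  set ε := (y - g x * f x) / (g x + 1)
  have hε : 0 < ε := div_pos (by linarith) (by linarith)
  have hεy : g x * (f x + ε) < y := by
    have : (g x + 1) * ε = y - g x * f x := mul_div_cancel₀ _ (by linarith)
    nlinarith
  filter_upwards [hf _ (lt_add_of_pos_right _ hε), (hg.mul_const _).eventually_lt_const hεy,
    self_mem_nhdsWithin] with z hfz hgz hz
  calc g z * f z ≤ g z * (f x + ε) := mul_le_mul_of_nonneg_left hfz.le (hg0 z hz)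
    _ < y := hgz

lemma upperSemicontinuousOn_sum_mul {ι : Type*} [Fintype ι] {f : X → ℝ}
    (hf : UpperSemicontinuous f) :
    UpperSemicontinuousOn (fun x : (ι → ℝ) × (ι → X) => ∑ j, x.1 j * f (x.2 j))
      (stdSimplex ℝ ι ×ˢ Set.univ) :=
  upperSemicontinuousOn_sum fun j _ _ hx =>
    ((hf.comp ((continuous_apply j).comp continuous_snd)).upperSemicontinuousWithinAt _ _
      ).continuousWithinAt_mul ((continuous_apply j).comp continuous_fst).continuousWithinAt
        (fun _ hz => hz.1.1 j) hx

lemma upperSemicontinuous_of_forall_le_le_add {f : ℕ → X → ℝ} {g : X → ℝ} {ε : ℕ → ℝ}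
    (hf : ∀ n, UpperSemicontinuous (f n)) (hfg : ∀ n x, f n x ≤ g x)
    (hgf : ∀ n x, g x ≤ f n x + ε n) (hε : Tendsto ε atTop (𝓝 0)) : UpperSemicontinuous g := by
  have hg : g = fun x => ⨅ n, (f n x + ε n) := funext fun x =>
    le_antisymm (le_ciInf fun n => hgf n x) <| by
      refine ge_of_tendsto' (by simpa using (tendsto_const_nhds (x := g x)).add hε) fun n =>
        (ciInf_le ⟨g x, Set.forall_mem_range.2 fun m => hgf m x⟩ n).trans ?_
      linarith [hfg n x]
  rw [hg]
  exact upperSemicontinuous_ciInf (fun x => ⟨g x, Set.forall_mem_range.2 fun m => hgf m x⟩)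
    fun n => (hf n).add continuous_const.upperSemicontinuous

end Semicontinuity

instance : CompactSpace (Belief Ω) :=
  isCompact_iff_compactSpace.1 (isCompact_stdSimplex ℝ Ω)

section Compactness

variable {F : Set (SPExp Ω)} {v : Belief Ω → ℝ} {Vhi : ℝ} {h : ℕ}

lemma exists_mem_le_expect_of_tendsto (hA1 : Assumption1 F h) {f : Belief Ω → ℝ}
    (hf : UpperSemicontinuous f) {p : Belief Ω} {q : ℕ → Belief Ω} (hq : Tendsto q atTop (𝓝 p))
    {e : ℕ → SPExp Ω} (heF : ∀ i, e i ∈ F) (hσ : ∀ i, (e i).sigma = q i) {y : ℝ}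
    (hy : ∀ i, y ≤ (e i).expect f) : ∃ e' ∈ F, e'.sigma = p ∧ y ≤ e'.expect f := by
  choose t ht r hr using fun i => (e i).exists_expect_eq_sum (hA1.1 _ (heF i))
  obtain ⟨⟨T, R⟩, hTR, φ, hφ, hlim⟩ :=
    ((isCompact_stdSimplex ℝ (Fin h)).prod isCompact_univ).tendsto_subseq
      (x := fun i => (t i, r i)) fun i => ⟨ht i, trivial⟩
  set e' := SPExp.ofSimplex T hTR.1 R
  have hweak : WeakTendsto (fun i => e (φ i)) e' := fun g hg => by
    simp only [hr, e', SPExp.expect_ofSimplex]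
    exact ((by fun_prop : Continuous fun x : (Fin h → ℝ) × (Fin h → Belief Ω) =>
      ∑ j, x.1 j * g (x.2 j)).tendsto _).comp hlim
  refine ⟨e', hA1.2 _ (fun i => heF _) e' hweak, Subtype.ext (funext fun ω => ?_), ?_⟩
  · have hω : Continuous fun r : Belief Ω => r.val ω :=
      (continuous_apply ω).comp continuous_subtype_val
    refine tendsto_nhds_unique (hweak _ hω) ?_
    simp only [← SPExp.sigma_val, hσ]
    exact (hω.tendsto p).comp (hq.comp hφ.tendsto_atTop)
  · by_contra! hlt
    rw [SPExp.expect_ofSimplex] at hlt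
    have hwithin : Tendsto (fun i => (t (φ i), r (φ i))) atTop
        (𝓝[stdSimplex ℝ (Fin h) ×ˢ Set.univ] (T, R)) :=
      tendsto_nhdsWithin_iff.2 ⟨hlim, Eventually.of_forall fun i => ⟨ht _, trivial⟩⟩
    obtain ⟨i, hi⟩ := (hwithin.eventually (upperSemicontinuousOn_sum_mul hf _ hTR _ hlt)).exists
    exact (hy (φ i)).not_gt (by rwa [hr])

lemma upperSemicontinuous_vN (hTF : Trivials Ω ⊆ F) (hvhi : ∀ p, v p ≤ Vhi)
    (husc : UpperSemicontinuous v) (hA1 : Assumption1 F h) (n : ℕ) :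
    UpperSemicontinuous (vN F v n) := by
  induction n with
  | zero => rwa [show vN F v 0 = v from funext (vN_zero hTF)]
  | succ n ih =>
    intro p y hy
    by_contra hfreq
    obtain ⟨y', hpy', hy'y⟩ := exists_between hy
    obtain ⟨q, hq, hqy⟩ := exists_seq_forall_of_frequently (not_eventually.1 hfreq)
    choose e heF hσ hlt using fun i =>
      exists_expect_vN_gt hTF hvhi (hy'y.trans_le (not_lt.1 (hqy i)))
    obtain ⟨e', he'F, hσ', hle⟩ :=
      exists_mem_le_expect_of_tendsto hA1 ih hq heF hσ fun i => (hlt i).le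
    exact (hle.trans (expect_vN_le hTF hvhi he'F hσ' n)).not_gt hpy'

end Compactness

end

theorem lem_upper_semicont_vInf_general {Ω : Type*} [Fintype Ω]
    (F : Set (SPExp Ω)) (hTF : Trivials Ω ⊆ F)
    (v : Belief Ω → ℝ) (Vlo Vhi : ℝ) (hVlo : 0 < Vlo)
    (hvlo : ∀ p, Vlo ≤ v p) (hvhi : ∀ p, v p ≤ Vhi)
    (husc : UpperSemicontinuous v)
    (h : ℕ) (hA1 : Assumption1 F h)
    (δ : ℝ) (hδ : 0 < δ) (hA2 : Assumption2 F δ) :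
    UpperSemicontinuous (vInf F v) := by
  have hv0 : ∀ p, 0 ≤ v p := fun p => hVlo.le.trans (hvlo p)
  refine upperSemicontinuous_of_forall_le_le_add
    (upperSemicontinuous_vN hTF hvhi husc hA1) (vN_le_vInf hTF hv0 hvhi)
    (vInf_le_vN_add hTF hv0 hvhi hδ hA2) ?_
  simpa [div_eq_mul_one_div (_ / δ)] using
    tendsto_one_div_add_atTop_nhds_zero_nat.const_mul (Vhi * Real.log (Fintype.card Ω) / δ)

/-- Lemma 6 (lem-upper-semicont), second part: under Assumptions 1 and 2, v_∞ is
upper semicontinuous. -/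
theorem lem_upper_semicont_vInf {Ω : Type*} [Fintype Ω] [Nonempty Ω]
    (F : Set (SPExp Ω)) (hTF : Trivials Ω ⊆ F)
    (v : Belief Ω → ℝ) (Vlo Vhi : ℝ) (hVlo : 0 < Vlo) (hVV : Vlo ≤ Vhi)
    (hvlo : ∀ p, Vlo ≤ v p) (hvhi : ∀ p, v p ≤ Vhi)
    (husc : UpperSemicontinuous v)
    (h : ℕ) (hA1 : Assumption1 F h)
    (δ : ℝ) (hδ : 0 < δ) (hA2 : Assumption2 F δ) :
    UpperSemicontinuous (vInf F v) :=
  lem_upper_semicont_vInf_general F hTF v Vlo Vhi hVlo hvlo hvhi husc h hA1 δ hδ hA2
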